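/- arXiv:1808.03118 — 7 statements merged into one kernel-verified Lean document; each statement's English description precedes it below -/
import Mathlib

section
/- Let S(λ) = λA+B be an n×n complex symmetric pencil with rank r₀ < n. Then S(λ) is the limit (in the Euclidean topology on pairs of matrices) of a sequence of n×n complex symmetric pencils each of rank exactly r₀+1. -/
/-!
If `rank (λA + B) < n`, some standard basis vector `e_j` lies outside the column space of the
pencil over `ℂ(λ)`; perturb `B` by `ε e_j e_jᵀ` with `ε → 0`. For a symmetric `M` and
`v ∉ range M`, the kernel of `M = Mᵀ` contains some `x` with `vᵀx ≠ 0` (a functional separating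
`v` from `range M`), so `M + c vvᵀ` with `c ≠ 0` hits `v`, and its column space is exactly
`range M ⊔ ⟨v⟩`: the rank goes up by exactly one.
-/

open Matrix Filter

noncomputable def pencilRat {n : ℕ} (A B : Matrix (Fin n) (Fin n) ℂ) :
    Matrix (Fin n) (Fin n) (RatFunc ℂ) :=
  Matrix.of fun i j => RatFunc.X * RatFunc.C (A i j) + RatFunc.C (B i j)

section RankOneUpdate

variable {F m n : Type*} [Field F] [Fintype m] [Fintype n] [DecidableEq m]

theorem Matrix.exists_vecMul_eq_zero_of_notMem_range (M : Matrix m n F) {v : m → F}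
    (hv : v ∉ LinearMap.range M.mulVecLin) : ∃ x, x ᵥ* M = 0 ∧ x ⬝ᵥ v ≠ 0 := by
  obtain ⟨f, hfv, hf⟩ := Submodule.exists_dual_map_eq_bot_of_notMem hv inferInstance
  obtain ⟨x, rfl⟩ := (dotProductEquiv F m).surjective f
  refine ⟨x, dotProduct_eq_zero_iff.mp fun w => ?_, by simpa using hfv⟩
  have hmem : x ⬝ᵥ M *ᵥ w ∈ (LinearMap.range M.mulVecLin).map (dotProductEquiv F m x) :=
    ⟨M *ᵥ w, ⟨w, rfl⟩, by simp⟩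
  rw [hf, Submodule.mem_bot, dotProduct_mulVec] at hmem
  exact hmem

theorem Matrix.exists_single_notMem_range_of_rank_lt (M : Matrix m n F)
    (hM : M.rank < Fintype.card m) : ∃ j, Pi.single j 1 ∉ LinearMap.range M.mulVecLin := by
  by_contra! h
  have htop : LinearMap.range M.mulVecLin = ⊤ := by
    rw [eq_top_iff, ← (Pi.basisFun F m).span_eq, Submodule.span_le]
    rintro _ ⟨j, rfl⟩
    simpa using h j
  rw [Matrix.rank, htop, finrank_top, Module.finrank_fintype_fun_eq_card] at hM
  exact hM.false

theorem Matrix.IsSymm.range_add_smul_vecMulVec {M : Matrix m m F} (hM : M.IsSymm)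
    {v : m → F} (hv : v ∉ LinearMap.range M.mulVecLin) {c : F} (hc : c ≠ 0) :
    LinearMap.range (M + c • vecMulVec v v).mulVecLin =
      LinearMap.range M.mulVecLin ⊔ Submodule.span F {v} := by
  have hN : ∀ x, (M + c • vecMulVec v v) *ᵥ x = M *ᵥ x + (c * (v ⬝ᵥ x)) • v := fun x => by
    rw [add_mulVec, smul_mulVec, vecMulVec_mulVec, op_smul_eq_smul, smul_smul]
  apply le_antisymm
  · rintro _ ⟨x, rfl⟩
    rw [mulVecLin_apply, hN]
    exact Submodule.add_mem_sup ⟨x, rfl⟩ (Submodule.mem_span_singleton.mpr ⟨_, rfl⟩)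
  obtain ⟨x₀, hx₀, hvx₀⟩ := M.exists_vecMul_eq_zero_of_notMem_range hv
  have hMx₀ : M *ᵥ x₀ = 0 := by rw [← hM.eq, mulVec_transpose, hx₀]
  have hv_mem : v ∈ LinearMap.range (M + c • vecMulVec v v).mulVecLin := by
    refine ⟨(c * (v ⬝ᵥ x₀))⁻¹ • x₀, ?_⟩
    rw [mulVecLin_apply, mulVec_smul, hN, hMx₀, zero_add, smul_smul,
      inv_mul_cancel₀ (mul_ne_zero hc (by rwa [dotProduct_comm])), one_smul]
  refine sup_le ?_ (Submodule.span_le.mpr (Set.singleton_subset_iff.mpr hv_mem))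
  rintro _ ⟨y, rfl⟩
  have hMy : M *ᵥ y = (M + c • vecMulVec v v) *ᵥ y - (c * (v ⬝ᵥ y)) • v := by
    rw [hN, add_sub_cancel_right]
  rw [mulVecLin_apply, hMy]
  exact sub_mem ⟨y, rfl⟩ (Submodule.smul_mem _ _ hv_mem)

theorem Matrix.IsSymm.rank_add_smul_vecMulVec {M : Matrix m m F} (hM : M.IsSymm)
    {v : m → F} (hv : v ∉ LinearMap.range M.mulVecLin) {c : F} (hc : c ≠ 0) :
    (M + c • vecMulVec v v).rank = M.rank + 1 := by
  rw [Matrix.rank, hM.range_add_smul_vecMulVec hv hc, Submodule.finrank_sup_span_singleton hv,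
    Matrix.rank]

end RankOneUpdate

theorem pencilRat_isSymm {n : ℕ} {A B : Matrix (Fin n) (Fin n) ℂ} (hA : A.IsSymm)
    (hB : B.IsSymm) : (pencilRat A B).IsSymm := by
  ext i k
  simp only [transpose_apply, pencilRat, of_apply, hA.apply k i, hB.apply k i]

theorem pencilRat_add_smul_single {n : ℕ} (A B : Matrix (Fin n) (Fin n) ℂ) (j : Fin n) (c : ℂ) :
    pencilRat A (B + c • single j j 1) =
      pencilRat A B + RatFunc.C c • vecMulVec (Pi.single j 1) (Pi.single j 1) := by
  rw [← single_eq_single_vecMulVec_single]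
  ext i k
  simp [pencilRat, single_apply, apply_ite RatFunc.C, add_assoc]

/-- Every `n × n` complex symmetric pencil `λA + B` of rank `r₀ < n` is the limit of a
sequence of `n × n` complex symmetric pencils, each of rank exactly `r₀ + 1`. -/
theorem stmt2 (n r₀ : ℕ) (A B : Matrix (Fin n) (Fin n) ℂ)
    (hA : A.IsSymm) (hB : B.IsSymm)
    (hrank : (pencilRat A B).rank = r₀) (hr : r₀ < n) :
    ∃ f : ℕ → Matrix (Fin n) (Fin n) ℂ × Matrix (Fin n) (Fin n) ℂ,
      (∀ m, (f m).1.IsSymm ∧ (f m).2.IsSymm ∧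
        (pencilRat (f m).1 (f m).2).rank = r₀ + 1) ∧
      Tendsto f atTop (nhds (A, B)) := by
  obtain ⟨j, hj⟩ := (pencilRat A B).exists_single_notMem_range_of_rank_lt
    (by simpa [hrank] using hr)
  let ε : ℕ → ℂ := fun m => 1 / ((m : ℂ) + 1)
  have hε : ∀ m, ε m ≠ 0 := fun m => one_div_ne_zero (Nat.cast_add_one_ne_zero m)
  refine ⟨fun m => (A, B + ε m • single j j 1), fun m => ⟨hA, ?_, ?_⟩, ?_⟩
  · exact hB.add (IsSymm.smul (transpose_single j j 1) (ε m))
  · rw [pencilRat_add_smul_single, (pencilRat_isSymm hA hB).rank_add_smul_vecMulVec hj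
      ((map_ne_zero _).mpr (hε m)), hrank]
  · have hcont : Continuous fun c : ℂ => (A, B + c • single j j (1 : ℂ)) := by fun_prop
    have h0 : Tendsto (fun c : ℂ => (A, B + c • single j j 1)) (nhds 0) (nhds (A, B)) := by
      simpa using hcont.tendsto 0
    exact h0.comp tendsto_one_div_add_atTop_nhds_zero_nat
end

section
/- Two complex symmetric matrix pencils λA+B and λC+D (A,B,C,D ∈ ℂ^{n×n} symmetric) are strictly equivalent (there exist invertible U,V with U(λA+B)V = λC+D, i.e., UAV = C and UBV = D) if and only if they are congruent (there exists invertible W with W^⊤AW = C and W^⊤BW = D). -/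
/-!
If `U A V = C` and `U B V = D`, put `T = U V⁻ᵀ` and `A₁ = Vᵀ A V`. Symmetry of `A` and `C` gives
`T A₁ = C = A₁ Tᵀ`, and likewise for `B`. The invertible matrix `T` has a square root `R = p(T)`
that is a polynomial in `T`, so `R` inherits the intertwining `R A₁ = A₁ Rᵀ`, whence
`R A₁ Rᵀ = R² A₁ = C`: the congruence is `W = V Rᵀ`.

The polynomial `p` is a square root of `X` in `ℂ[X]/(χ_T)`, which exists because `χ_T(0) ≠ 0`:
Lagrange interpolation of square roots at the eigenvalues gives `p₀` with `p₀² - X` nilpotent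
there, and Newton's method corrects `p₀` to an exact square root.
-/

open Matrix Polynomial

theorem exists_sq_eq_of_isNilpotent_sq_sub {S : Type*} [CommRing S] (h2 : IsUnit (2 : S))
    {a x : S} (ha : IsUnit a) (hx : IsNilpotent (x ^ 2 - a)) : ∃ r : S, r ^ 2 = a := by
  have hx2 : IsUnit (x ^ 2) := by
    simpa using hx.isUnit_add_left_of_commute ha (Commute.all _ _)
  have hP : aeval x (derivative (X ^ 2 - C a)) = 2 * x := by simp [one_add_one_eq_two]
  obtain ⟨r, ⟨-, hr⟩, -⟩ := existsUnique_nilpotent_sub_and_aeval_eq_zero (P := X ^ 2 - C a)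
    (x := x) (by simpa using hx) (hP ▸ h2.mul (isUnit_pow_iff two_ne_zero |>.mp hx2))
  exact ⟨r, by simpa [sub_eq_zero] using hr⟩

theorem Polynomial.dvd_pow_natDegree_of_forall_isRoot {K : Type*} [Field K] [IsAlgClosed K]
    {q f : K[X]} (hq : q ≠ 0) (h : ∀ a, q.IsRoot a → f.IsRoot a) : q ∣ f ^ q.natDegree := by
  calc q = C q.leadingCoeff * (q.roots.map fun a ↦ X - C a).prod :=
        (C_leadingCoeff_mul_prod_multiset_X_sub_C IsAlgClosed.card_roots_eq_natDegree).symm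
    _ ∣ (q.roots.map fun _ ↦ f).prod :=
        (C_mul_dvd (leadingCoeff_ne_zero.mpr hq)).mpr <| Multiset.prod_dvd_prod_of_dvd _ _
          fun a ha ↦ dvd_iff_isRoot.mpr (h a (isRoot_of_mem_roots ha))
    _ = f ^ q.natDegree := by
        rw [Multiset.map_const', Multiset.prod_replicate, IsAlgClosed.card_roots_eq_natDegree]

theorem AdjoinRoot.isUnit_root_of_coeff_zero_ne_zero {K : Type*} [Field K] {q : K[X]}
    (hq : q.coeff 0 ≠ 0) : IsUnit (root q) := by
  obtain ⟨u, v, huv⟩ := (irreducible_X.coprime_iff_not_dvd (n := q)).mpr (X_dvd_iff.not.mpr hq)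
  refine .of_mul_eq_one_right (mk q u) ?_
  simpa using congrArg (mk q) huv

theorem Polynomial.exists_dvd_sq_sub_X {q : ℂ[X]} (hq0 : q ≠ 0) (hq : q.coeff 0 ≠ 0) :
    ∃ p : ℂ[X], q ∣ p ^ 2 - X := by
  classical
  set p₀ := Lagrange.interpolate q.roots.toFinset id fun a ↦ a ^ (2⁻¹ : ℂ)
  have hp₀ : ∀ a, q.IsRoot a → (p₀ ^ 2 - X).IsRoot a := fun a ha ↦ by
    have hnode : p₀.eval a = a ^ (2⁻¹ : ℂ) := Lagrange.eval_interpolate_at_node (v := id) _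
      (Set.injOn_id _) (Multiset.mem_toFinset.mpr ((mem_roots hq0).mpr ha))
    rw [IsRoot, eval_sub, eval_pow, eval_X, hnode, Complex.cpow_ofNat_inv_pow, sub_self]
  have h2 : IsUnit (2 : AdjoinRoot q) := by
    rw [← map_ofNat (algebraMap ℂ (AdjoinRoot q)) 2]
    exact (IsUnit.mk0 _ two_ne_zero).map _
  obtain ⟨r, hr⟩ := exists_sq_eq_of_isNilpotent_sq_sub (x := AdjoinRoot.mk q p₀) h2
    (AdjoinRoot.isUnit_root_of_coeff_zero_ne_zero hq)
    ⟨q.natDegree, by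
      rw [← AdjoinRoot.mk_X, ← map_pow, ← map_sub, ← map_pow, AdjoinRoot.mk_eq_zero]
      exact dvd_pow_natDegree_of_forall_isRoot hq0 hp₀⟩
  obtain ⟨p, rfl⟩ := AdjoinRoot.mk_surjective r
  rw [← AdjoinRoot.mk_X, ← map_pow, ← sub_eq_zero, ← map_sub, AdjoinRoot.mk_eq_zero] at hr
  exact ⟨p, hr⟩

theorem Polynomial.aeval_mul_eq_mul_aeval {R A : Type*} [CommSemiring R] [Semiring A] [Algebra R A]
    {a b m : A} (h : a * m = m * b) (p : R[X]) : aeval a p * m = m * aeval b p := by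
  induction p using Polynomial.induction_on' with
  | add p q hp hq => rw [map_add, map_add, add_mul, mul_add, hp, hq]
  | monomial k c =>
    rw [aeval_monomial, aeval_monomial, ← Algebra.smul_def, ← Algebra.smul_def, smul_mul_assoc,
      mul_smul_comm, (SemiconjBy.pow_right h.symm k).eq]

theorem Matrix.aeval_transpose {ι R : Type*} [Fintype ι] [DecidableEq ι] [CommSemiring R]
    (T : Matrix ι ι R) (p : R[X]) : aeval Tᵀ p = (aeval T p)ᵀ := by
  induction p using Polynomial.induction_on' with
  | add p q hp hq => rw [map_add, map_add, transpose_add, hp, hq]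
  | monomial k a => simp only [aeval_monomial, ← Algebra.smul_def, transpose_smul, transpose_pow]

theorem Matrix.exists_aeval_sq_eq_of_isUnit_det {ι : Type*} [Fintype ι] [DecidableEq ι]
    (T : Matrix ι ι ℂ) (hT : IsUnit T.det) : ∃ p : ℂ[X], aeval T p ^ 2 = T := by
  have hq : T.charpoly.coeff 0 ≠ 0 := fun h ↦
    hT.ne_zero (by rw [det_eq_sign_charpoly_coeff, h, mul_zero])
  obtain ⟨p, hp⟩ := exists_dvd_sq_sub_X T.charpoly_monic.ne_zero hq
  refine ⟨p, sub_eq_zero.mp ?_⟩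
  simpa using aeval_eq_zero_of_dvd_aeval_eq_zero hp (aeval_self_charpoly T)

namespace Matrix

variable {ι K : Type*} [Fintype ι] [DecidableEq ι] [CommRing K] {U V A : Matrix ι ι K}

theorem mul_transpose_inv_mul_transpose_mul_mul (hV : IsUnit V.det) :
    U * (V⁻¹)ᵀ * (Vᵀ * A * V) = U * A * V := by
  simp only [Matrix.mul_assoc]
  rw [← Matrix.mul_assoc (V⁻¹)ᵀ, ← transpose_mul, mul_nonsing_inv _ hV, transpose_one,
    Matrix.one_mul]

theorem transpose_mul_mul_mul_transpose_of_isSymm (hV : IsUnit V.det) (hA : A.IsSymm)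
    (hC : (U * A * V).IsSymm) : Vᵀ * A * V * (U * (V⁻¹)ᵀ)ᵀ = U * A * V := by
  conv_rhs => rw [← hC.eq]
  rw [transpose_mul, transpose_transpose, Matrix.mul_assoc, ← Matrix.mul_assoc V,
    mul_nonsing_inv _ hV, Matrix.one_mul, transpose_mul, transpose_mul, hA.eq, Matrix.mul_assoc]

theorem transpose_mul_mul_eq_of_aeval_sq_eq (hV : IsUnit V.det) (hA : A.IsSymm)
    (hC : (U * A * V).IsSymm) (p : K[X])
    (hp : aeval (U * (V⁻¹)ᵀ) p ^ 2 = U * (V⁻¹)ᵀ) :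
    (V * (aeval (U * (V⁻¹)ᵀ) p)ᵀ)ᵀ * A * (V * (aeval (U * (V⁻¹)ᵀ) p)ᵀ) = U * A * V := by
  set T := U * (V⁻¹)ᵀ
  set R := aeval T p
  set A₁ := Vᵀ * A * V
  have hTA : T * A₁ = U * A * V := mul_transpose_inv_mul_transpose_mul_mul hV
  have hAT : A₁ * Tᵀ = U * A * V := transpose_mul_mul_mul_transpose_of_isSymm hV hA hC
  have hRA : R * A₁ = A₁ * Rᵀ := by
    rw [← aeval_transpose]
    exact aeval_mul_eq_mul_aeval (hTA.trans hAT.symm) p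
  calc (V * Rᵀ)ᵀ * A * (V * Rᵀ) = R * A₁ * Rᵀ := by
        simp only [A₁, transpose_mul, transpose_transpose, Matrix.mul_assoc]
    _ = A₁ * (R ^ 2)ᵀ := by rw [hRA, Matrix.mul_assoc, sq, transpose_mul]
    _ = U * A * V := by rw [hp, hAT]

end Matrix

/-- Two complex symmetric matrix pencils `λA + B` and `λC + D` are strictly equivalent
if and only if they are congruent. -/
theorem stmt3 (n : ℕ) (A B C D : Matrix (Fin n) (Fin n) ℂ)
    (hA : A.IsSymm) (hB : B.IsSymm) (hC : C.IsSymm) (hD : D.IsSymm) :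
    (∃ U V : Matrix (Fin n) (Fin n) ℂ, IsUnit U.det ∧ IsUnit V.det ∧
      U * A * V = C ∧ U * B * V = D) ↔
    (∃ W : Matrix (Fin n) (Fin n) ℂ, IsUnit W.det ∧
      Wᵀ * A * W = C ∧ Wᵀ * B * W = D) := by
  constructor
  · rintro ⟨U, V, hU, hV, rfl, rfl⟩
    have hT : IsUnit (U * (V⁻¹)ᵀ).det := by
      rw [det_mul, det_transpose]
      exact hU.mul (isUnit_nonsing_inv_det V hV)
    obtain ⟨p, hp⟩ := exists_aeval_sq_eq_of_isUnit_det _ hT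
    have hR : IsUnit (aeval (U * (V⁻¹)ᵀ) p).det :=
      (isUnit_pow_iff two_ne_zero).mp (by rwa [← det_pow, hp])
    refine ⟨V * (aeval (U * (V⁻¹)ᵀ) p)ᵀ, ?_, transpose_mul_mul_eq_of_aeval_sq_eq hV hA hC p hp,
      transpose_mul_mul_eq_of_aeval_sq_eq hV hB hD p hp⟩
    rw [det_mul, det_transpose]
    exact hV.mul hR
  · rintro ⟨W, hW, rfl, rfl⟩
    exact ⟨Wᵀ, W, by rwa [det_transpose], hW, rfl, rfl⟩
end

section
/- Let λ₁ ≠ λ₂ be complex numbers, let P(λ) = diag(λ−λ₁, λ−λ₂, 0) and let Q(λ) be the 3×3 symmetric pencil with Q(λ)_{13} = Q(λ)_{31} = λ, Q(λ)_{23} = Q(λ)_{32} = 1, and all other entries 0. Then for every ε > 0 there exist matrices A,B ∈ ℂ^{3×3} with ‖A‖ + ‖B‖ < ε such that the pencil P(λ) + λA + B is strictly equivalent to Q(λ). -/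
open Matrix

attribute [local instance] Matrix.normedAddCommGroup

/-- The coefficient of `λ` in `P(λ) = diag(λ-λ₁, λ-λ₂, 0)`. -/
def P1 : Matrix (Fin 3) (Fin 3) ℂ := !![1, 0, 0; 0, 1, 0; 0, 0, 0]

/-- The constant coefficient of `P(λ) = diag(λ-λ₁, λ-λ₂, 0)`. -/
def P0 (l₁ l₂ : ℂ) : Matrix (Fin 3) (Fin 3) ℂ := !![-l₁, 0, 0; 0, -l₂, 0; 0, 0, 0]

/-- The coefficient of `λ` in `Q(λ)`. -/
def Q1 : Matrix (Fin 3) (Fin 3) ℂ := !![0, 0, 1; 0, 0, 0; 1, 0, 0]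

/-- The constant coefficient of `Q(λ)`. -/
def Q0 : Matrix (Fin 3) (Fin 3) ℂ := !![0, 0, 0; 0, 0, 1; 0, 1, 0]

/-!
Perturbing only the constant coefficient, by `ε₁` at position `(1,3)` and `ε₂` at `(3,2)`, turns
`P(λ)` into `[[λ-λ₁, 0, ε₁], [0, λ-λ₂, 0], [0, ε₂, 0]]`. As soon as `ε₁, ε₂ ≠ 0` this pencil is
carried to `Q(λ)` by explicit invertible `U, V`; taking `ε₁ = ε₂ = ε/2` and `A = 0` makes the
perturbation as small as wanted.
-/

/-- Strict equivalence of the pencils `λM + N` and `λM' + N'`. -/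
def PencilStrictEquiv {n R : Type*} [Fintype n] [DecidableEq n] [CommRing R]
    (M N M' N' : Matrix n n R) : Prop :=
  ∃ U V : Matrix n n R, IsUnit U.det ∧ IsUnit V.det ∧ U * M * V = M' ∧ U * N * V = N'

def cornerPerturbation (e₁ e₂ : ℂ) : Matrix (Fin 3) (Fin 3) ℂ := !![0, 0, e₁; 0, 0, 0; 0, e₂, 0]

theorem norm_cornerPerturbation_le (e₁ e₂ : ℂ) :
    ‖cornerPerturbation e₁ e₂‖ ≤ max ‖e₁‖ ‖e₂‖ := by
  rw [Matrix.norm_le_iff (by positivity)]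
  intro i j
  fin_cases i <;> fin_cases j <;> simp [cornerPerturbation]

theorem pencilStrictEquiv_perturbed (l₁ l₂ : ℂ) {e₁ e₂ : ℂ} (he₁ : e₁ ≠ 0) (he₂ : e₂ ≠ 0) :
    PencilStrictEquiv P1 (P0 l₁ l₂ + cornerPerturbation e₁ e₂) Q1 Q0 := by
  -- Solve `U P₁ V = Q₁`, `U (P₀ + B) V = Q₀` with `U, V` of these zero patterns.
  refine ⟨!![0, e₂, l₂; 0, 0, 1; 1, 0, 0], !![1, 0, 0; 0, 0, 1 / e₂; l₁ / e₁, 1 / e₁, 0],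
    ?_, ?_, ?_, ?_⟩
  · simp [det_fin_three, he₂]
  · simp [det_fin_three, he₁, he₂]
  · ext i j
    fin_cases i <;> fin_cases j <;> simp [P1, Q1, mul_apply, Fin.sum_univ_three, he₂]
  · ext i j
    fin_cases i <;> fin_cases j <;>
      simp [P0, Q0, cornerPerturbation, mul_apply, Fin.sum_univ_three, he₁, he₂, mul_div_cancel₀,
        mul_comm]

theorem stmt4_general (l₁ l₂ : ℂ) :
    ∀ ε : ℝ, 0 < ε → ∃ A B : Matrix (Fin 3) (Fin 3) ℂ, ‖A‖ + ‖B‖ < ε ∧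
      ∃ U V : Matrix (Fin 3) (Fin 3) ℂ, IsUnit U.det ∧ IsUnit V.det ∧
        U * (P1 + A) * V = Q1 ∧ U * (P0 l₁ l₂ + B) * V = Q0 := by
  intro ε hε
  set e : ℂ := ((ε / 2 : ℝ) : ℂ)
  have he : e ≠ 0 := Complex.ofReal_ne_zero.mpr (by positivity)
  have hnorm : ‖cornerPerturbation e e‖ < ε := by
    calc ‖cornerPerturbation e e‖ ≤ max ‖e‖ ‖e‖ := norm_cornerPerturbation_le e e
      _ = ε / 2 := by simp [e, abs_of_pos hε]
      _ < ε := half_lt_self hε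
  refine ⟨0, cornerPerturbation e e, by simpa using hnorm, ?_⟩
  rw [add_zero]
  exact pencilStrictEquiv_perturbed l₁ l₂ he he

/-- For `λ₁ ≠ λ₂`, and every `ε > 0`, there is a perturbation `λA + B` with
`‖A‖ + ‖B‖ < ε` such that the pencil `P(λ) + λA + B` is strictly equivalent to `Q(λ)`. -/
theorem stmt4 (l₁ l₂ : ℂ) (h : l₁ ≠ l₂) :
    ∀ ε : ℝ, 0 < ε → ∃ A B : Matrix (Fin 3) (Fin 3) ℂ, ‖A‖ + ‖B‖ < ε ∧
      ∃ U V : Matrix (Fin 3) (Fin 3) ℂ, IsUnit U.det ∧ IsUnit V.det ∧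
        U * (P1 + A) * V = Q1 ∧ U * (P0 l₁ l₂ + B) * V = Q0 :=
  stmt4_general l₁ l₂
end

section
/- For ℓ ≥ 1 and μ ∈ ℂ, the ℓ×ℓ symmetric pencil J^s_ℓ(μ), which has entries 1 on the positions (i, ℓ−i) for i = 1,…,ℓ−1 and entries λ−μ on the anti-diagonal positions (i, ℓ+1−i) for i = 1,…,ℓ, is the limit as m → ∞ of the pencils J^s_ℓ(μ) + (1/m)·E_{ℓℓ}, and each pencil J^s_ℓ(μ) + (1/m)·E_{ℓℓ} (for m ∈ ℕ) has ℓ distinct eigenvalues, each with algebraic multiplicity one (i.e., its determinant, as a polynomial in λ of degree ℓ, has ℓ distinct roots). -/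
open Matrix Filter Polynomial

/-!
Reversing the order of the columns of `J^s_ℓ(μ) + c E_{ℓℓ}` produces
`(λ - μ) I + N + c E_{ℓ1}`, with `N` the nilpotent shift; expanding along the last row, its
determinant is `(λ - μ)^ℓ + (-1)^(ℓ-1) c`. For `c ≠ 0` this polynomial is coprime to its derivative
`ℓ (λ - μ)^(ℓ-1)`, so it has `ℓ` simple roots. The convergence is just `1 / m → 0`.
-/

namespace Matrix

variable {R : Type*} [CommRing R]

def upperBidiagonal (n : ℕ) (d : R) : Matrix (Fin n) (Fin n) R :=
  of fun i j => if (i : ℕ) = j then d else if (i : ℕ) + 1 = j then 1 else 0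

theorem det_upperBidiagonal (n : ℕ) (d : R) : (upperBidiagonal n d).det = d ^ n := by
  rw [det_of_isUpperTriangular]
  · simp [upperBidiagonal]
  · intro i j (hij : (j : ℕ) < i)
    simp only [upperBidiagonal, of_apply]
    rw [if_neg (by omega), if_neg (by omega)]

theorem det_updateRow_upperBidiagonal_last_single_zero (n : ℕ) (d c : R) :
    ((upperBidiagonal (n + 1) d).updateRow (Fin.last n) (Pi.single 0 c)).det = (-1) ^ n * c := by
  rw [det_succ_row _ (Fin.last n), Finset.sum_eq_single 0]
  · -- deleting the last row and the first column leaves a lower unitriangular matrix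
    rw [det_of_isLowerTriangular]
    · simp [upperBidiagonal, Fin.succAbove_last]
    · intro i j (hij : (i : ℕ) < j)
      simp only [submatrix_apply, Fin.succAbove_last, Fin.zero_succAbove,
        updateRow_ne (Fin.castSucc_lt_last i).ne, upperBidiagonal, of_apply, Fin.val_castSucc,
        Fin.val_succ]
      rw [if_neg (by omega), if_neg (by omega)]
  · intro j _ hj
    simp [hj]
  · simp

theorem upperBidiagonal_add_single_last_zero (n : ℕ) (d c : R) :
    upperBidiagonal (n + 1) d + single (Fin.last n) 0 c =
      (upperBidiagonal (n + 1) d).updateRow (Fin.last n)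
        (upperBidiagonal (n + 1) d (Fin.last n) + Pi.single 0 c) := by
  ext i j
  by_cases hi : i = Fin.last n
  · subst hi
    rcases eq_or_ne j 0 with rfl | hj <;> simp [*, Ne.symm]
  · simp [updateRow_ne hi, Ne.symm hi]

theorem det_upperBidiagonal_add_single_last_zero (n : ℕ) (d c : R) :
    (upperBidiagonal (n + 1) d + single (Fin.last n) 0 c).det = d ^ (n + 1) + (-1) ^ n * c := by
  rw [upperBidiagonal_add_single_last_zero, det_updateRow_add, updateRow_eq_self,
    det_upperBidiagonal, det_updateRow_upperBidiagonal_last_single_zero]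

noncomputable def pencil {ι : Type*} (A B : Matrix ι ι R) : Matrix ι ι R[X] :=
  of fun i j => X * C (A i j) + C (B i j)

/-- `J^s_ℓ(μ) = pencil (symJordanLeading ℓ) (symJordanConst ℓ μ)`, indexed from `0`. -/
def symJordanLeading (ℓ : ℕ) : Matrix (Fin ℓ) (Fin ℓ) R :=
  of fun i j => if (i : ℕ) + (j : ℕ) + 1 = ℓ then 1 else 0

def symJordanConst (ℓ : ℕ) (μ : R) : Matrix (Fin ℓ) (Fin ℓ) R :=
  of fun i j => if (i : ℕ) + (j : ℕ) + 1 = ℓ then -μ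
    else if (i : ℕ) + (j : ℕ) + 2 = ℓ then 1 else 0

theorem pencil_symJordan_submatrix_revPerm (n : ℕ) (μ c : R) :
    (pencil (symJordanLeading (n + 1)) (symJordanConst (n + 1) μ +
        single (Fin.last n) (Fin.last n) c)).submatrix id Fin.revPerm =
      upperBidiagonal (n + 1) (X - C μ) + single (Fin.last n) 0 (C c) := by
  ext i j : 1
  have hrev : ((Fin.rev j : Fin (n + 1)) : ℕ) = n - j := by rw [Fin.val_rev]; omega
  simp only [submatrix_apply, id_eq, Fin.revPerm_apply, pencil, symJordanLeading, symJordanConst,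
    upperBidiagonal, of_apply, add_apply, single_apply, Fin.ext_iff, Fin.val_last, Fin.val_zero,
    hrev]
  have := j.is_le
  split_ifs <;> first | omega | (simp <;> ring)

theorem det_pencil_symJordan_add_single (n : ℕ) (μ c : R) :
    (pencil (symJordanLeading (n + 1)) (symJordanConst (n + 1) μ +
        single (Fin.last n) (Fin.last n) c)).det =
      C ((Equiv.Perm.sign (Fin.revPerm : Equiv.Perm (Fin (n + 1))) : ℤ) : R) *
        ((X - C μ) ^ (n + 1) + C ((-1) ^ n * c)) := by
  have h := det_permute' Fin.revPerm (pencil (symJordanLeading (n + 1))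
    (symJordanConst (n + 1) μ + single (Fin.last n) (Fin.last n) c))
  rw [pencil_symJordan_submatrix_revPerm, det_upperBidiagonal_add_single_last_zero] at h
  rw [map_intCast, C_mul, C_pow, C_neg, C_1, h, ← mul_assoc, ← Int.cast_mul, ← Units.val_mul,
    Int.units_mul_self, Units.val_one, Int.cast_one, one_mul]

end Matrix

namespace Polynomial

theorem natDegree_X_sub_C_pow_add_C {R : Type*} [CommRing R] [Nontrivial R] (k : ℕ) (μ a : R) :
    ((X - C μ) ^ k + C a).natDegree = k := by
  rw [natDegree_add_C, (monic_X_sub_C μ).natDegree_pow, natDegree_X_sub_C, mul_one]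

theorem separable_X_sub_C_pow_add_C {K : Type*} [Field K] {k : ℕ} (hk : (k : K) ≠ 0) (μ : K)
    {a : K} (ha : a ≠ 0) : ((X - C μ) ^ k + C a).Separable := by
  obtain ⟨j, rfl⟩ : ∃ j, k = j + 1 :=
    Nat.exists_eq_add_one.mpr (Nat.pos_of_ne_zero (by rintro rfl; simp at hk))
  -- `(X - μ) q' = k (q - a)` gives the Bézout identity `q / a - (X - μ) q' / (k a) = 1`
  refine ⟨C a⁻¹, -C (a⁻¹ * ((j + 1 : ℕ) : K)⁻¹) * (X - C μ), ?_⟩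
  have ha' : C a⁻¹ * C a = 1 := by rw [← C_mul, inv_mul_cancel₀ ha, C_1]
  have hk' : C ((j + 1 : ℕ) : K)⁻¹ * C ((j + 1 : ℕ) : K) = 1 := by
    rw [← C_mul, inv_mul_cancel₀ hk, C_1]
  rw [derivative_add, derivative_C, add_zero, derivative_X_sub_C_pow, C_mul, Nat.add_sub_cancel]
  linear_combination ha' - C a⁻¹ * (X - C μ) ^ (j + 1) * hk'

theorem card_roots_toFinset_eq_natDegree {K : Type*} [Field K] [IsAlgClosed K] [DecidableEq K]
    {p : K[X]} (hp : p.Separable) : p.roots.toFinset.card = p.natDegree := by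
  rw [Multiset.toFinset_card_of_nodup (nodup_roots hp), IsAlgClosed.card_roots_eq_natDegree]

end Polynomial

/-- The symmetric Jordan-like pencil `J^s_ℓ(μ)` is the limit of the perturbed pencils
`J^s_ℓ(μ) + (1/m)·E_{ℓℓ}`, and each perturbed pencil (for `m ≥ 1`) is regular with `ℓ`
distinct eigenvalues, each of algebraic multiplicity one: its determinant is a polynomial
in `λ` of degree `ℓ` with `ℓ` distinct roots. -/
theorem stmt6 (ℓ : ℕ) (hℓ : 1 ≤ ℓ) (μ : ℂ) :
    -- coefficient of λ in J^s_ℓ(μ): ones on the main anti-diagonal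
    let A : Matrix (Fin ℓ) (Fin ℓ) ℂ :=
      Matrix.of fun i j => if (i : ℕ) + (j : ℕ) + 1 = ℓ then 1 else 0
    -- constant coefficient of J^s_ℓ(μ): -μ on the main anti-diagonal, ones just above it
    let B : Matrix (Fin ℓ) (Fin ℓ) ℂ :=
      Matrix.of fun i j => if (i : ℕ) + (j : ℕ) + 1 = ℓ then -μ
        else if (i : ℕ) + (j : ℕ) + 2 = ℓ then 1 else 0
    let E : Matrix (Fin ℓ) (Fin ℓ) ℂ :=
      Matrix.single ⟨ℓ - 1, by omega⟩ ⟨ℓ - 1, by omega⟩ 1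
    Tendsto (fun m : ℕ => (A, B + (1 / (m : ℂ)) • E)) atTop (nhds (A, B)) ∧
    ∀ m : ℕ, 1 ≤ m →
      (Matrix.det (Matrix.of fun i j =>
          Polynomial.X * Polynomial.C (A i j) +
            Polynomial.C ((B + (1 / (m : ℂ)) • E) i j))).natDegree = ℓ ∧
      (Matrix.det (Matrix.of fun i j =>
          Polynomial.X * Polynomial.C (A i j) +
            Polynomial.C ((B + (1 / (m : ℂ)) • E) i j))).roots.toFinset.card = ℓ := by
  intro A B E
  refine ⟨tendsto_const_nhds.prodMk_nhds ?_, fun m hm => ?_⟩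
  · simpa using
      tendsto_const_nhds.add ((tendsto_one_div_atTop_nhds_zero_nat (𝕜 := ℂ)).smul_const E)
  obtain ⟨n, rfl⟩ : ∃ n, ℓ = n + 1 := ⟨ℓ - 1, by omega⟩
  have hdet : (pencil A (B + (1 / (m : ℂ)) • E)).det =
      C ((Equiv.Perm.sign (Fin.revPerm : Equiv.Perm (Fin (n + 1))) : ℤ) : ℂ) *
        ((X - C μ) ^ (n + 1) + C ((-1) ^ n * (1 / (m : ℂ)))) := by
    rw [← det_pencil_symJordan_add_single, smul_single, smul_eq_mul, mul_one]
    rfl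
  have hsign : ((Equiv.Perm.sign (Fin.revPerm : Equiv.Perm (Fin (n + 1))) : ℤ) : ℂ) ≠ 0 := by
    simp
  have hsep := separable_X_sub_C_pow_add_C (k := n + 1) (Nat.cast_ne_zero.mpr n.succ_ne_zero) μ
    (a := (-1) ^ n * (1 / (m : ℂ))) (by simp; omega)
  change (pencil A _).det.natDegree = n + 1 ∧ (pencil A _).det.roots.toFinset.card = n + 1
  rw [hdet, natDegree_C_mul hsign, roots_C_mul _ hsign, card_roots_toFinset_eq_natDegree hsep,
    natDegree_X_sub_C_pow_add_C, and_self]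
end

section
/- Let S(λ) be an n×n pencil of the block form [[A(λ), B(λ), C(λ)], [B(λ)^⊤, R(λ), 0], [C(λ)^⊤, 0, 0]], where C(λ) has size a×(n−r+a), R(λ) has size (r−2a)×(r−2a), and suppose rank S = r over ℂ(λ). Then rank C = a and rank R = r−2a over ℂ(λ); in particular R(λ) is a regular pencil. -/
open Matrix

/-- The `n × n` block matrix `[[A, B, C], [Bᵀ, R, 0], [Cᵀ, 0, 0]]`. -/
def blockSym3 {F : Type*} [CommRing F] {a b c : ℕ}
    (A : Matrix (Fin a) (Fin a) F) (B : Matrix (Fin a) (Fin b) F)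
    (C : Matrix (Fin a) (Fin c) F) (R : Matrix (Fin b) (Fin b) F) :
    Matrix (Fin a ⊕ (Fin b ⊕ Fin c)) (Fin a ⊕ (Fin b ⊕ Fin c)) F :=
  Matrix.fromBlocks A
    (Matrix.of fun i j => Sum.elim (B i) (C i) j)
    (Matrix.of fun i j => Sum.elim (fun k => B j k) (fun k => C j k) i)
    (Matrix.fromBlocks R 0 0 0)

/-!
Deleting `k` rows or columns of a matrix lowers its rank by at most `k`. Deleting the first
`a + b` rows of `S` leaves `[Cᵀ 0 0]`, so `rank S ≤ a + b + rank C`; deleting the first `a` rows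
and the first `a` columns leaves `[[R, 0], [0, 0]]`, so `rank S ≤ 2a + rank R`. Since
`rank S = r = 2a + b`, `rank C ≤ a` and `rank R ≤ b`, both bounds are attained, and a square `R`
of full rank is invertible.
-/

namespace Matrix

variable {K : Type*} [Field K] {m m₁ m₂ n n₁ n₂ : Type*}
  [Fintype m₁] [Fintype m₂] [Fintype n] [Fintype n₁] [Fintype n₂]

theorem rank_fromCols_le (A₁ : Matrix m n₁ K) (A₂ : Matrix m n₂ K) :
    (fromCols A₁ A₂).rank ≤ A₁.rank + A₂.rank := by
  have hrange : LinearMap.range (fromCols A₁ A₂).mulVecLin ≤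
      LinearMap.range A₁.mulVecLin ⊔ LinearMap.range A₂.mulVecLin := by
    rintro _ ⟨v, rfl⟩
    rw [mulVecLin_apply, ← Sum.elim_comp_inl_inr v, fromCols_mulVec_sumElim]
    exact Submodule.add_mem_sup ⟨_, rfl⟩ ⟨_, rfl⟩
  exact (Submodule.finrank_mono hrange).trans
    (Submodule.finrank_add_le_finrank_add_finrank _ _)

theorem rank_fromRows_le (A₁ : Matrix m₁ n K) (A₂ : Matrix m₂ n K) :
    (fromRows A₁ A₂).rank ≤ A₁.rank + A₂.rank := by
  simpa only [← rank_transpose (fromRows A₁ A₂), transpose_fromRows, rank_transpose]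
    using rank_fromCols_le A₁ᵀ A₂ᵀ

theorem rank_fromCols_le_card_add (A₁ : Matrix m n₁ K) (A₂ : Matrix m n₂ K) :
    (fromCols A₁ A₂).rank ≤ Fintype.card n₁ + A₂.rank :=
  (rank_fromCols_le A₁ A₂).trans (Nat.add_le_add_right A₁.rank_le_card_width _)

theorem rank_fromRows_le_card_add (A₁ : Matrix m₁ n K) (A₂ : Matrix m₂ n K) :
    (fromRows A₁ A₂).rank ≤ Fintype.card m₁ + A₂.rank :=
  (rank_fromRows_le A₁ A₂).trans (Nat.add_le_add_right A₁.rank_le_card_height _)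

theorem rank_fromCols_zero_le (A : Matrix m n₁ K) :
    (fromCols A (0 : Matrix m n₂ K)).rank ≤ A.rank := by
  simpa only [rank_zero, add_zero] using rank_fromCols_le A (0 : Matrix m n₂ K)

theorem rank_fromRows_zero_le (A : Matrix m₁ n K) :
    (fromRows A (0 : Matrix m₂ n K)).rank ≤ A.rank := by
  simpa only [rank_zero, add_zero] using rank_fromRows_le A (0 : Matrix m₂ n K)

theorem det_ne_zero_of_rank_eq_card [DecidableEq n] {M : Matrix n n K}
    (hM : M.rank = Fintype.card n) : M.det ≠ 0 := by
  have hsurj : LinearMap.range M.mulVecLin = ⊤ :=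
    Submodule.eq_top_of_finrank_eq (hM.trans (Module.finrank_fintype_fun_eq_card K).symm)
  have hunit : IsUnit M :=
    mulVec_surjective_iff_isUnit.mp (LinearMap.range_eq_top.mp hsurj)
  exact ((isUnit_iff_isUnit_det M).mp hunit).ne_zero

end Matrix

section blockSym3

variable {K : Type*} [Field K] {a b c : ℕ}
  (A : Matrix (Fin a) (Fin a) K) (B : Matrix (Fin a) (Fin b) K)
  (C : Matrix (Fin a) (Fin c) K) (R : Matrix (Fin b) (Fin b) K)

theorem blockSym3_eq_fromRows_fromRows :
    blockSym3 A B C R = fromRows (fromCols A (fromCols B C))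
      (fromRows (fromCols Bᵀ (fromCols R (0 : Matrix (Fin b) (Fin c) K)))
        (fromCols Cᵀ (0 : Matrix (Fin c) (Fin b ⊕ Fin c) K))) := by
  ext (i | i | i) (j | j | j) <;> rfl

theorem blockSym3_eq_fromRows_fromCols :
    blockSym3 A B C R = fromRows (fromCols A (fromCols B C))
      (fromCols (fromRows Bᵀ Cᵀ)
        (fromRows (fromCols R (0 : Matrix (Fin b) (Fin c) K))
          (0 : Matrix (Fin c) (Fin b ⊕ Fin c) K))) := by
  ext (i | i | i) (j | j | j) <;> rfl

theorem rank_blockSym3_le_add_rank_C :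
    (blockSym3 A B C R).rank ≤ a + b + C.rank := by
  rw [blockSym3_eq_fromRows_fromRows, ← rank_transpose C, add_assoc]
  refine le_trans (rank_fromRows_le_card_add _ _) ?_
  rw [Fintype.card_fin]
  refine Nat.add_le_add_left (le_trans (rank_fromRows_le_card_add _ _) ?_) _
  rw [Fintype.card_fin]
  exact Nat.add_le_add_left (rank_fromCols_zero_le _) _

theorem rank_blockSym3_le_add_rank_R :
    (blockSym3 A B C R).rank ≤ a + a + R.rank := by
  rw [blockSym3_eq_fromRows_fromCols, add_assoc]
  refine le_trans (rank_fromRows_le_card_add _ _) ?_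
  rw [Fintype.card_fin]
  refine Nat.add_le_add_left (le_trans (rank_fromCols_le_card_add _ _) ?_) _
  rw [Fintype.card_fin]
  exact Nat.add_le_add_left ((rank_fromRows_zero_le _).trans (rank_fromCols_zero_le _)) _

end blockSym3

theorem stmt9_general (n r a : ℕ) (h2a : 2 * a ≤ r)
    (A : Matrix (Fin a) (Fin a) (RatFunc ℂ))
    (B : Matrix (Fin a) (Fin (r - 2 * a)) (RatFunc ℂ))
    (C : Matrix (Fin a) (Fin (n - r + a)) (RatFunc ℂ))
    (R : Matrix (Fin (r - 2 * a)) (Fin (r - 2 * a)) (RatFunc ℂ))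
    (hrank : (blockSym3 A B C R).rank = r) :
    C.rank = a ∧ R.rank = r - 2 * a ∧ R.det ≠ 0 := by
  have hC_le : C.rank ≤ a := rank_le_height C
  have hR_le : R.rank ≤ r - 2 * a := rank_le_height R
  have hC_ge := hrank ▸ rank_blockSym3_le_add_rank_C A B C R
  have hR_ge := hrank ▸ rank_blockSym3_le_add_rank_R A B C R
  have hR : R.rank = r - 2 * a := by omega
  exact ⟨by omega, hR, det_ne_zero_of_rank_eq_card (hR.trans (Fintype.card_fin _).symm)⟩

/-- If the `n × n` pencil `S(λ) = [[A, B, C], [Bᵀ, R, 0], [Cᵀ, 0, 0]]`, with `C` of size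
`a × (n-r+a)` and `R` of size `(r-2a) × (r-2a)`, has rank `r` over `ℂ(λ)`, then
`rank C = a`, `rank R = r - 2a`, and in particular `R(λ)` is a regular pencil. -/
theorem stmt9 (n r a : ℕ) (h2a : 2 * a ≤ r) (hrn : r ≤ n)
    (A : Matrix (Fin a) (Fin a) (RatFunc ℂ))
    (B : Matrix (Fin a) (Fin (r - 2 * a)) (RatFunc ℂ))
    (C : Matrix (Fin a) (Fin (n - r + a)) (RatFunc ℂ))
    (R : Matrix (Fin (r - 2 * a)) (Fin (r - 2 * a)) (RatFunc ℂ))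
    (hrank : (blockSym3 A B C R).rank = r) :
    C.rank = a ∧ R.rank = r - 2 * a ∧ R.det ≠ 0 :=
  stmt9_general n r a h2a A B C R hrank
end

section
/- Let H(λ) be an n×n pencil of block form [[A(λ), B(λ), C(λ)], [B(λ)^⊤, R(λ), 0], [C(λ)^⊤, 0, 0]] with C(λ) of size a×(n−r+a) and R(λ) regular of size (r−2a)×(r−2a), and suppose rank H = r over ℂ(λ). If λ₀ ∈ ℂ satisfies rank C(λ₀) < a and rank H(λ₀) = r−1, then every r×r minor of H(λ) that is not identically zero is divisible by (λ−λ₀)². -/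
open Matrix Polynomial

/-!
Label the indices of `H = blockSym3 A B C R` by `0, 1, 2` according as they belong to the
block of `A`, of `R`, or to the trailing zero block; then `H x y = 0` whenever the labels of
`x` and `y` add up to more than `2`. In a nonsingular matrix, `k` rows supported on `l` columns
force `k ≤ l`; applied to the rows and to the columns of a nonzero `r × r` minor, this shows that
the minor uses exactly `a`, `r - 2a`, `a` rows and columns of each label. After a permutation of
its columns it is then block upper triangular, with diagonal blocks an `a × a` minor of `C`, a
reordering of `R` and an `a × a` minor of `Cᵀ`. Both minors of `C` vanish at `λ₀` since
`rank C(λ₀) < a`, whence the factor `(X - λ₀)²`.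
-/
theorem Matrix.card_le_card_of_det_ne_zero {R m : Type*} [CommRing R] [Fintype m]
    [DecidableEq m] {M : Matrix m m R} (hM : M.det ≠ 0) {P Q : m → Prop} [DecidablePred P]
    [DecidablePred Q] (hPQ : ∀ i j, P i → ¬ Q j → M i j = 0) :
    Fintype.card {i // P i} ≤ Fintype.card {j // Q j} := by
  by_contra! hlt
  refine hM ?_
  rw [det_apply]
  refine Finset.sum_eq_zero fun σ _ => ?_
  obtain ⟨j, hPj, hQj⟩ : ∃ j, P (σ j) ∧ ¬ Q j := by
    by_contra! hσ
    refine hlt.not_ge (Fintype.card_le_of_injective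
      (fun i => ⟨σ.symm i, hσ _ (by simpa using i.2)⟩) fun i i' h => ?_)
    exact Subtype.ext (by simpa using congrArg Subtype.val h)
  rw [Finset.prod_eq_zero (f := fun i => M (σ i) i) (Finset.mem_univ j) (hPQ _ _ hPj hQj),
    smul_zero]

theorem Fintype.card_le_of_forall_mem_range {κ ι α : Type*} [Fintype κ] [Fintype α]
    {f : κ → ι} (hf : Function.Injective f) {e : α → ι} (h : ∀ i, f i ∈ Set.range e) :
    Fintype.card κ ≤ Fintype.card α := by
  choose u hu using h
  exact Fintype.card_le_of_injective u fun i j hij => hf (by rw [← hu i, ← hu j, hij])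

theorem Fintype.card_fiber_add_card_fiber_add_card_fiber {m : Type*} [Fintype m] (p : m → Fin 3) :
    Fintype.card {i // p i = 0} + Fintype.card {i // p i = 1} + Fintype.card {i // p i = 2} =
      Fintype.card m := by
  rw [← Fintype.card_congr (Equiv.sigmaFiberEquiv p), Fintype.card_sigma, Fin.sum_univ_three]

theorem Matrix.exists_perm_blockTriangular {R m α : Type*} [Zero R] [Fintype m] [LT α]
    [DecidableEq α] (M : Matrix m m R) {p q : m → α}
    (hM : ∀ i j, q j < p i → M i j = 0)
    (hcard : ∀ k, Fintype.card {i // p i = k} = Fintype.card {j // q j = k}) :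
    ∃ σ : Equiv.Perm m, (∀ i, q (σ i) = p i) ∧ (M.submatrix id σ).BlockTriangular p := by
  let σ : Equiv.Perm m := Equiv.ofFiberEquiv fun k => Fintype.equivOfCardEq (hcard k)
  have hσ : ∀ i, q (σ i) = p i := Equiv.ofFiberEquiv_map _
  exact ⟨σ, hσ, fun i j hij => hM _ _ (by rwa [hσ])⟩

theorem Polynomial.X_sub_C_dvd_det_submatrix {K m n κ : Type*} [Field K] [Fintype n]
    [Fintype κ] [DecidableEq κ] (M : Matrix m n K[X]) (x : K) (u : κ → m) (v : κ → n)
    (hM : (M.map (eval x)).rank < Fintype.card κ) : X - C x ∣ (M.submatrix u v).det := by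
  rw [dvd_iff_isRoot, IsRoot, ← coe_evalRingHom, RingHom.map_det, RingHom.mapMatrix_apply,
    coe_evalRingHom, ← submatrix_map]
  by_contra hdet
  have hunit : IsUnit ((M.map (eval x)).submatrix u v) :=
    (isUnit_iff_isUnit_det _).2 (Ne.isUnit hdet)
  exact hM.not_ge (rank_of_isUnit _ hunit ▸ rank_submatrix_le _ u v)

theorem Polynomial.X_sub_C_dvd_det_submatrix_of_forall_mem_range {K m n α β κ : Type*}
    [Field K] [Fintype n] [Fintype β] [Fintype κ] [DecidableEq κ] (M : Matrix m n K[X]) (x : K)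
    {e : α → m} {e' : β → n} {u : κ → m} {v : κ → n} (hu : ∀ i, u i ∈ Set.range e)
    (hv : ∀ j, v j ∈ Set.range e')
    (hM : ((M.submatrix e e').map (eval x)).rank < Fintype.card κ) :
    X - C x ∣ (M.submatrix u v).det := by
  choose u' hu' using hu
  choose v' hv' using hv
  have hsub : M.submatrix u v = (M.submatrix e e').submatrix u' v' := by
    ext i j
    simp [hu', hv']
  exact hsub ▸ X_sub_C_dvd_det_submatrix _ x u' v' hM

section blockSym3

variable {F : Type*} [CommRing F] {a b c : ℕ} (A : Matrix (Fin a) (Fin a) F)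
  (B : Matrix (Fin a) (Fin b) F) (C : Matrix (Fin a) (Fin c) F) (R : Matrix (Fin b) (Fin b) F)

theorem blockSym3_transpose : (blockSym3 A B C R)ᵀ = blockSym3 Aᵀ B C Rᵀ := by
  ext (i | i | i) (j | j | j) <;> simp [blockSym3]

theorem det_blockSym3_transpose_submatrix {r : ℕ} (f g : Fin r → Fin a ⊕ (Fin b ⊕ Fin c)) :
    ((blockSym3 Aᵀ B C Rᵀ).submatrix g f).det = ((blockSym3 A B C R).submatrix f g).det := by
  rw [← blockSym3_transpose, ← transpose_submatrix, det_transpose]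

theorem blockSym3_submatrix_inl_inr_inr :
    (blockSym3 A B C R).submatrix Sum.inl (Sum.inr ∘ Sum.inr) = C := by
  ext i j
  simp [blockSym3]

theorem blockSym3_submatrix_inr_inr_inl :
    (blockSym3 A B C R).submatrix (Sum.inr ∘ Sum.inr) Sum.inl = Cᵀ := by
  ext i j
  simp [blockSym3]

def blockIndex : Fin a ⊕ (Fin b ⊕ Fin c) → Fin 3 :=
  Sum.elim (fun _ => 0) (Sum.elim (fun _ => 1) (fun _ => 2))

theorem blockSym3_eq_zero {x y : Fin a ⊕ (Fin b ⊕ Fin c)}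
    (h : (blockIndex y).rev < blockIndex x) : blockSym3 A B C R x y = 0 := by
  rcases x with x | x | x <;> rcases y with y | y | y <;> simp_all [blockIndex, blockSym3]

variable {A B C R}

theorem mem_range_inl_of_blockIndex_eq_zero {x : Fin a ⊕ (Fin b ⊕ Fin c)}
    (h : blockIndex x = 0) : x ∈ Set.range Sum.inl := by
  rcases x with x | x | x <;> simp_all [blockIndex]

theorem mem_range_inr_inl_of_blockIndex_eq_one {x : Fin a ⊕ (Fin b ⊕ Fin c)}
    (h : blockIndex x = 1) : x ∈ Set.range (Sum.inr ∘ Sum.inl) := by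
  rcases x with x | x | x <;> simp_all [blockIndex]

theorem mem_range_inr_inr_of_blockIndex_eq_two {x : Fin a ⊕ (Fin b ⊕ Fin c)}
    (h : blockIndex x = 2) : x ∈ Set.range (Sum.inr ∘ Sum.inr) := by
  rcases x with x | x | x <;> simp_all [blockIndex]

end blockSym3

section minor

variable {F : Type*} [CommRing F] {a b c r : ℕ} {A : Matrix (Fin a) (Fin a) F}
  {B : Matrix (Fin a) (Fin b) F} {C : Matrix (Fin a) (Fin c) F} {R : Matrix (Fin b) (Fin b) F}
  {f g : Fin r → Fin a ⊕ (Fin b ⊕ Fin c)}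

theorem card_blockIndex_comp_le (hf : Function.Injective f) (k : Fin 3) :
    Fintype.card {i // blockIndex (f i) = k} ≤ ![a, b, c] k := by
  have hf' : Function.Injective fun i : {i // blockIndex (f i) = k} => f i :=
    hf.comp Subtype.val_injective
  fin_cases k
  · simpa using Fintype.card_le_of_forall_mem_range hf' fun i =>
      mem_range_inl_of_blockIndex_eq_zero i.2
  · simpa using Fintype.card_le_of_forall_mem_range hf' fun i =>
      mem_range_inr_inl_of_blockIndex_eq_one i.2
  · simpa using Fintype.card_le_of_forall_mem_range hf' fun i =>
      mem_range_inr_inr_of_blockIndex_eq_two i.2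

theorem card_blockIndex_two_le_of_det_ne_zero
    (hne : ((blockSym3 A B C R).submatrix f g).det ≠ 0) :
    Fintype.card {i // blockIndex (f i) = 2} ≤ Fintype.card {j // blockIndex (g j) = 0} :=
  card_le_card_of_det_ne_zero hne fun i j hi hj => blockSym3_eq_zero A B C R <| by
    rw [hi]
    revert hj
    generalize blockIndex (g j) = k
    fin_cases k <;> decide

theorem card_blockIndex_of_det_ne_zero (hr : a + b + a = r) (hf : Function.Injective f)
    (hg : Function.Injective g) (hne : ((blockSym3 A B C R).submatrix f g).det ≠ 0) (k : Fin 3) :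
    Fintype.card {i // blockIndex (f i) = k} = ![a, b, a] k := by
  have hfg := card_blockIndex_two_le_of_det_ne_zero hne
  have hgf := card_blockIndex_two_le_of_det_ne_zero
    ((det_blockSym3_transpose_submatrix A B C R f g).trans_ne hne)
  have hf_sum := Fintype.card_fiber_add_card_fiber_add_card_fiber (blockIndex ∘ f)
  have hg_sum := Fintype.card_fiber_add_card_fiber_add_card_fiber (blockIndex ∘ g)
  have hf0 := card_blockIndex_comp_le hf 0
  have hf1 := card_blockIndex_comp_le hf 1
  have hg0 := card_blockIndex_comp_le hg 0
  have hg1 := card_blockIndex_comp_le hg 1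
  simp only [Function.comp_apply, Fintype.card_fin] at hf_sum hg_sum
  simp only [Fin.isValue, cons_val_zero, cons_val_one] at hf0 hf1 hg0 hg1
  fin_cases k <;> simp only [Fin.zero_eta, Fin.mk_one, Fin.reduceFinMk, cons_val] <;> omega

theorem exists_perm_blockTriangular_blockSym3_submatrix (hr : a + b + a = r)
    (hf : Function.Injective f) (hg : Function.Injective g)
    (hne : ((blockSym3 A B C R).submatrix f g).det ≠ 0) :
    ∃ σ : Equiv.Perm (Fin r), (∀ i, (blockIndex (g (σ i))).rev = blockIndex (f i)) ∧
      (((blockSym3 A B C R).submatrix f g).submatrix id σ).BlockTriangular (blockIndex ∘ f) := by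
  have hcard_f := card_blockIndex_of_det_ne_zero hr hf hg hne
  have hcard_g := card_blockIndex_of_det_ne_zero hr hg hf
    ((det_blockSym3_transpose_submatrix A B C R f g).trans_ne hne)
  refine exists_perm_blockTriangular _ (q := Fin.rev ∘ blockIndex ∘ g)
    (fun i j h => blockSym3_eq_zero A B C R h) fun k => ?_
  simp only [Function.comp_apply, Fin.rev_eq_iff]
  rw [hcard_f, hcard_g]
  fin_cases k <;> rfl

end minor

theorem X_sub_C_sq_dvd_det_blockSym3_submatrix {K : Type*} [Field K] {a b c r : ℕ}
    (hr : a + b + a = r) {A : Matrix (Fin a) (Fin a) K[X]} {B : Matrix (Fin a) (Fin b) K[X]}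
    {C : Matrix (Fin a) (Fin c) K[X]} {R : Matrix (Fin b) (Fin b) K[X]} {x : K}
    (hC : (C.map (eval x)).rank < a) {f g : Fin r → Fin a ⊕ (Fin b ⊕ Fin c)}
    (hf : Function.Injective f) (hg : Function.Injective g)
    (hne : ((blockSym3 A B C R).submatrix f g).det ≠ 0) :
    (X - Polynomial.C x) ^ 2 ∣ ((blockSym3 A B C R).submatrix f g).det := by
  have hcard_f := card_blockIndex_of_det_ne_zero hr hf hg hne
  obtain ⟨σ, hσ, htri⟩ := exists_perm_blockTriangular_blockSym3_submatrix hr hf hg hne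
  set N := ((blockSym3 A B C R).submatrix f g).submatrix id σ
  have h0 : X - Polynomial.C x ∣ (N.toSquareBlock (blockIndex ∘ f) 0).det := by
    refine X_sub_C_dvd_det_submatrix_of_forall_mem_range (blockSym3 A B C R) x
      (u := fun i : {i // blockIndex (f i) = 0} => f i) (v := fun j => g (σ j))
      (e := Sum.inl) (e' := Sum.inr ∘ Sum.inr) (fun i => mem_range_inl_of_blockIndex_eq_zero i.2)
      (fun j => mem_range_inr_inr_of_blockIndex_eq_two (Fin.rev_eq_iff.1 ((hσ j).trans j.2))) ?_
    rw [blockSym3_submatrix_inl_inr_inr]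
    exact hC.trans_eq (hcard_f 0).symm
  have h2 : X - Polynomial.C x ∣ (N.toSquareBlock (blockIndex ∘ f) 2).det := by
    refine X_sub_C_dvd_det_submatrix_of_forall_mem_range (blockSym3 A B C R) x
      (u := fun i : {i // blockIndex (f i) = 2} => f i) (v := fun j => g (σ j))
      (e := Sum.inr ∘ Sum.inr) (e' := Sum.inl)
      (fun i => mem_range_inr_inr_of_blockIndex_eq_two i.2)
      (fun j => mem_range_inl_of_blockIndex_eq_zero (Fin.rev_eq_iff.1 ((hσ j).trans j.2))) ?_
    rw [blockSym3_submatrix_inr_inr_inl, transpose_map, rank_transpose]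
    exact hC.trans_eq (hcard_f 2).symm
  have hsign : IsUnit ((Equiv.Perm.sign σ : ℤ) : K[X]) :=
    (Equiv.Perm.sign σ).isUnit.map (Int.castRingHom K[X])
  rw [← hsign.dvd_mul_left, ← det_permute', htri.det_fintype, Fin.prod_univ_three, sq,
    mul_right_comm]
  exact (mul_dvd_mul h0 h2).mul_right _

theorem stmt10_general (n r a : ℕ) (h2a : 2 * a ≤ r) (lam₀ : ℂ)
    (A : Matrix (Fin a) (Fin a) (Polynomial ℂ))
    (B : Matrix (Fin a) (Fin (r - 2 * a)) (Polynomial ℂ))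
    (C : Matrix (Fin a) (Fin (n - r + a)) (Polynomial ℂ))
    (R : Matrix (Fin (r - 2 * a)) (Fin (r - 2 * a)) (Polynomial ℂ))
    (hC : (C.map (Polynomial.eval lam₀)).rank < a) :
    ∀ f g : Fin r → (Fin a ⊕ (Fin (r - 2 * a) ⊕ Fin (n - r + a))),
      Function.Injective f → Function.Injective g →
      ((blockSym3 A B C R).submatrix f g).det ≠ 0 →
      (X - Polynomial.C lam₀) ^ 2 ∣ ((blockSym3 A B C R).submatrix f g).det :=
  fun _ _ hf hg hne => X_sub_C_sq_dvd_det_blockSym3_submatrix (by omega) hC hf hg hne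

/-- Let `H(λ) = [[A, B, C], [Bᵀ, R, 0], [Cᵀ, 0, 0]]` be an `n × n` pencil with `C` of size
`a × (n-r+a)` and `R` regular of size `(r-2a) × (r-2a)`, and suppose `rank H = r` over
`ℂ(λ)`. If `λ₀ ∈ ℂ` satisfies `rank C(λ₀) < a` and `rank H(λ₀) = r - 1`, then every
`r × r` minor of `H(λ)` which is not identically zero is divisible by `(λ - λ₀)²`. -/
theorem stmt10 (n r a : ℕ) (h2a : 2 * a ≤ r) (hrn : r ≤ n) (lam₀ : ℂ)
    (A : Matrix (Fin a) (Fin a) (Polynomial ℂ))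
    (B : Matrix (Fin a) (Fin (r - 2 * a)) (Polynomial ℂ))
    (C : Matrix (Fin a) (Fin (n - r + a)) (Polynomial ℂ))
    (R : Matrix (Fin (r - 2 * a)) (Fin (r - 2 * a)) (Polynomial ℂ))
    (hdeg : ∀ i j, ((blockSym3 A B C R) i j).degree ≤ 1)
    (hreg : R.det ≠ 0)
    (hrank : ((blockSym3 A B C R).map
      (algebraMap (Polynomial ℂ) (RatFunc ℂ))).rank = r)
    (hC : (C.map (Polynomial.eval lam₀)).rank < a)
    (hH : ((blockSym3 A B C R).map (Polynomial.eval lam₀)).rank = r - 1) :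
    ∀ f g : Fin r → (Fin a ⊕ (Fin (r - 2 * a) ⊕ Fin (n - r + a))),
      Function.Injective f → Function.Injective g →
      ((blockSym3 A B C R).submatrix f g).det ≠ 0 →
      (X - Polynomial.C lam₀) ^ 2 ∣ ((blockSym3 A B C R).submatrix f g).det :=
  stmt10_general n r a h2a lam₀ A B C R hC
end

section
/- Let W ∈ GL_n(ℂ) and write W^⊤ = Q^⊤ R with Q unitary and R upper triangular (QR-type factorization). If S(λ) = W^⊤ Z(λ) W where Z(λ) is an n×n pencil with block structure [[0, 0, L(λ)], [0, J(λ), 0], [L'(λ), 0, 0]] (with L of size p×q, J of size m×m, L' of size q×p, and p + m + q = n), then S(λ) = Q^⊤ H(λ) Q where H(λ) = R Z(λ) R^⊤ has block structure [[*, *, R₁₁ L(λ) R₃₃^⊤], [*, R₂₂ J(λ) R₂₂^⊤, 0], [R₃₃ L'(λ) R₁₁^⊤, 0, 0]], with R₁₁, R₂₂, R₃₃ the diagonal blocks of R; in particular the bottom-right blocks in positions (2,3), (3,2), (3,3) of H(λ) are zero, the block R₂₂ J(λ) R₂₂^⊤ is congruent to J(λ), and R₁₁ L(λ) R₃₃^⊤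 is strictly equivalent to L(λ). -/
open Matrix Polynomial

/-- Embedding of the first block `Fin p` into `Fin (p + m + q)`. -/
def emb1 (p m q : ℕ) : Fin p → Fin (p + m + q) := fun j => ⟨(j : ℕ), by omega⟩

/-- Embedding of the second block `Fin m` into `Fin (p + m + q)`. -/
def emb2 (p m q : ℕ) : Fin m → Fin (p + m + q) := fun j => ⟨p + (j : ℕ), by omega⟩

/-- Embedding of the third block `Fin q` into `Fin (p + m + q)`. -/
def emb3 (p m q : ℕ) : Fin q → Fin (p + m + q) := fun j => ⟨p + m + (j : ℕ), by omega⟩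

lemma sum_emb {n r : ℕ} (e : Fin r → Fin (p + m + q)) (he : Function.Injective e)
    (f : Fin (p + m + q) → Polynomial ℂ) (hf : ∀ x : Fin (p + m + q), (∀ j, e j ≠ x) → f x = 0) :
    ∑ x, f x = ∑ j, f (e j) := by
  rw [← Finset.sum_image (fun a _ b _ h => he h)]
  refine (Finset.sum_subset (Finset.subset_univ _) ?_).symm
  intro x _ hx
  refine hf x fun j h => hx ?_
  exact Finset.mem_image.mpr ⟨j, Finset.mem_univ _, h⟩

lemma entry3 {r s t u : ℕ} (A : Matrix (Fin r) (Fin s) (Polynomial ℂ))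
    (B : Matrix (Fin s) (Fin t) (Polynomial ℂ)) (D : Matrix (Fin u) (Fin t) (Polynomial ℂ))
    (x : Fin r) (y : Fin u) :
    (A * B * Dᵀ) x y = ∑ l, ∑ k, A x k * B k l * D y l := by
  simp only [Matrix.mul_apply, Matrix.transpose_apply, Finset.sum_mul]

/-- Let `W` be invertible with `Wᵀ = Qᵀ R`, `Q` unitary, `R` upper triangular, and let
`Z(λ)` be a pencil with block structure `[[0, 0, L], [0, J, 0], [L', 0, 0]]` (blocks of
sizes `p`, `m`, `q`).  If `S(λ) = Wᵀ Z(λ) W`, then `S(λ) = Qᵀ H(λ) Q` with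
`H(λ) = R Z(λ) Rᵀ`, the blocks of `H` in positions (2,3), (3,2), (3,3) vanish, the
(2,2) block of `H` is `R₂₂ J(λ) R₂₂ᵀ` (congruent to `J(λ)`), the (1,3) block is
`R₁₁ L(λ) R₃₃ᵀ` and the (3,1) block is `R₃₃ L'(λ) R₁₁ᵀ` (strictly equivalent to `L(λ)`,
`L'(λ)`), where `R₁₁, R₂₂, R₃₃` (the diagonal blocks of `R`) are invertible. -/
theorem stmt19 (p m q : ℕ) (W Q R : Matrix (Fin (p + m + q)) (Fin (p + m + q)) ℂ)
    (hW : IsUnit W.det)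
    (hQ : Q ∈ Matrix.unitaryGroup (Fin (p + m + q)) ℂ)
    (hR : R.BlockTriangular (id : Fin (p + m + q) → Fin (p + m + q)))
    (hQR : Wᵀ = Qᵀ * R)
    (Z : Matrix (Fin (p + m + q)) (Fin (p + m + q)) (Polynomial ℂ))
    (hZdeg : ∀ i j, (Z i j).degree ≤ 1)
    (hZ : ∀ i j : Fin (p + m + q), Z i j ≠ 0 →
      ((i : ℕ) < p ∧ p + m ≤ (j : ℕ)) ∨
      (p ≤ (i : ℕ) ∧ (i : ℕ) < p + m ∧ p ≤ (j : ℕ) ∧ (j : ℕ) < p + m) ∨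
      (p + m ≤ (i : ℕ) ∧ (j : ℕ) < p)) :
    (W.map Polynomial.C)ᵀ * Z * (W.map Polynomial.C) =
      (Q.map Polynomial.C)ᵀ * ((R.map Polynomial.C) * Z * (R.map Polynomial.C)ᵀ) *
        (Q.map Polynomial.C) ∧
    (∀ i j : Fin (p + m + q),
      ((p ≤ (i : ℕ) ∧ p + m ≤ (j : ℕ)) ∨ (p + m ≤ (i : ℕ) ∧ p ≤ (j : ℕ))) →
      ((R.map Polynomial.C) * Z * (R.map Polynomial.C)ᵀ) i j = 0) ∧
    ((R.map Polynomial.C) * Z * (R.map Polynomial.C)ᵀ).submatrix (emb2 p m q) (emb2 p m q)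
      = ((R.submatrix (emb2 p m q) (emb2 p m q)).map Polynomial.C) *
          (Z.submatrix (emb2 p m q) (emb2 p m q)) *
          ((R.submatrix (emb2 p m q) (emb2 p m q)).map Polynomial.C)ᵀ ∧
    ((R.map Polynomial.C) * Z * (R.map Polynomial.C)ᵀ).submatrix (emb1 p m q) (emb3 p m q)
      = ((R.submatrix (emb1 p m q) (emb1 p m q)).map Polynomial.C) *
          (Z.submatrix (emb1 p m q) (emb3 p m q)) *
          ((R.submatrix (emb3 p m q) (emb3 p m q)).map Polynomial.C)ᵀ ∧
    ((R.map Polynomial.C) * Z * (R.map Polynomial.C)ᵀ).submatrix (emb3 p m q) (emb1 p m q)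
      = ((R.submatrix (emb3 p m q) (emb3 p m q)).map Polynomial.C) *
          (Z.submatrix (emb3 p m q) (emb1 p m q)) *
          ((R.submatrix (emb1 p m q) (emb1 p m q)).map Polynomial.C)ᵀ ∧
    IsUnit (R.submatrix (emb1 p m q) (emb1 p m q)).det ∧
    IsUnit (R.submatrix (emb2 p m q) (emb2 p m q)).det ∧
    IsUnit (R.submatrix (emb3 p m q) (emb3 p m q)).det := by
  -- basic facts
  have hRzero : ∀ x k : Fin (p + m + q), (k : ℕ) < (x : ℕ) → R x k = 0 := by
    intro x k h
    exact hR (show (id k : Fin (p + m + q)) < id x from Fin.lt_def.mpr h)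
  have hZ' : ∀ k l : Fin (p + m + q),
      ¬ ((((k : ℕ) < p ∧ p + m ≤ (l : ℕ)) ∨
        (p ≤ (k : ℕ) ∧ (k : ℕ) < p + m ∧ p ≤ (l : ℕ) ∧ (l : ℕ) < p + m) ∨
        (p + m ≤ (k : ℕ) ∧ (l : ℕ) < p))) → Z k l = 0 := by
    intro k l h
    by_contra h'
    exact h (hZ k l h')
  have hzero : ∀ x y k l : Fin (p + m + q),
      ((k : ℕ) < (x : ℕ) ∨ (l : ℕ) < (y : ℕ) ∨ Z k l = 0) →
      (R.map Polynomial.C) x k * Z k l * (R.map Polynomial.C) y l = 0 := by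
    rintro x y k l (h | h | h)
    · simp [Matrix.map_apply, hRzero x k h]
    · simp [Matrix.map_apply, hRzero y l h]
    · simp [h]
  have inj1 : Function.Injective (emb1 p m q) := by
    intro a b h; simp only [emb1, Fin.mk.injEq] at h; exact Fin.ext h
  have inj2 : Function.Injective (emb2 p m q) := by
    intro a b h; simp only [emb2, Fin.mk.injEq] at h; exact Fin.ext (by omega)
  have inj3 : Function.Injective (emb3 p m q) := by
    intro a b h; simp only [emb3, Fin.mk.injEq] at h; exact Fin.ext (by omega)
  have mem1 : ∀ x : Fin (p + m + q), (∀ j, emb1 p m q j ≠ x) → ¬ ((x : ℕ) < p) := by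
    intro x h hx
    exact h ⟨(x : ℕ), hx⟩ (Fin.ext rfl)
  have mem2 : ∀ x : Fin (p + m + q), (∀ j, emb2 p m q j ≠ x) → ¬ (p ≤ (x : ℕ) ∧ (x : ℕ) < p + m) := by
    rintro x h ⟨h1, h2⟩
    exact h ⟨(x : ℕ) - p, by omega⟩ (Fin.ext (by simp [emb2]; omega))
  have mem3 : ∀ x : Fin (p + m + q), (∀ j, emb3 p m q j ≠ x) → ¬ (p + m ≤ (x : ℕ)) := by
    intro x h hx
    exact h ⟨(x : ℕ) - (p + m), by omega⟩ (Fin.ext (by simp [emb3]; omega))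
  have hdetR : IsUnit R.det := by
    have h1 : Qᵀ.det * R.det = W.det := by
      rw [← Matrix.det_mul, ← hQR, Matrix.det_transpose]
    have h2 : IsUnit (Qᵀ.det * R.det) := h1 ▸ hW
    exact isUnit_of_mul_isUnit_right h2
  have hdiag : ∀ x : Fin (p + m + q), R x x ≠ 0 := by
    have hd : R.det = ∏ x, R x x := Matrix.det_of_upperTriangular hR
    rw [hd, isUnit_iff_ne_zero] at hdetR
    intro x
    exact Finset.prod_ne_zero_iff.mp hdetR x (Finset.mem_univ x)
  refine ⟨?_, ?_, ?_, ?_, ?_, ?_, ?_, ?_⟩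
  · -- first: algebraic identity
    have hW' : W = Rᵀ * Q := by
      have := congrArg Matrix.transpose hQR
      simpa [Matrix.transpose_mul] using this
    rw [hW']
    simp only [Matrix.transpose_mul, Matrix.transpose_transpose,
      Matrix.map_mul, Matrix.transpose_map]
    noncomm_ring
  · -- zero entries
    rintro i j hij
    rw [entry3]
    refine Finset.sum_eq_zero fun l _ => Finset.sum_eq_zero fun k _ => ?_
    apply hzero
    rcases Nat.lt_or_ge (k : ℕ) (i : ℕ) with h | h
    · exact Or.inl h
    rcases Nat.lt_or_ge (l : ℕ) (j : ℕ) with h' | h'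
    · exact Or.inr (Or.inl h')
    refine Or.inr (Or.inr (hZ' k l ?_))
    omega
  · -- (2,2) block
    refine Matrix.ext fun i' j' => ?_
    rw [Matrix.submatrix_apply, entry3, entry3]
    refine Eq.trans (sum_emb (n := p + m + q) (emb2 p m q) inj2
      (fun l => ∑ k, R.map Polynomial.C (emb2 p m q i') k * Z k l *
        R.map Polynomial.C (emb2 p m q j') l) ?_) ?_
    · intro l hl
      have hl' := mem2 l hl
      refine Finset.sum_eq_zero fun k _ => ?_
      apply hzero
      rcases Nat.lt_or_ge (l : ℕ) ((emb2 p m q j' : Fin (p + m + q)) : ℕ) with h | h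
      · exact Or.inr (Or.inl h)
      rcases Nat.lt_or_ge (k : ℕ) ((emb2 p m q i' : Fin (p + m + q)) : ℕ) with h2 | h2
      · exact Or.inl h2
      refine Or.inr (Or.inr (hZ' k l ?_))
      simp only [emb2] at h h2 ⊢
      omega
    · refine Finset.sum_congr rfl fun l' _ => ?_
      refine Eq.trans (sum_emb (n := p + m + q) (emb2 p m q) inj2
        (fun k => R.map Polynomial.C (emb2 p m q i') k * Z k (emb2 p m q l') *
          R.map Polynomial.C (emb2 p m q j') (emb2 p m q l')) ?_) ?_
      · intro k hk
        have hk' := mem2 k hk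
        apply hzero
        rcases Nat.lt_or_ge (k : ℕ) ((emb2 p m q i' : Fin (p + m + q)) : ℕ) with h | h
        · exact Or.inl h
        refine Or.inr (Or.inr (hZ' k (emb2 p m q l') ?_))
        simp only [emb2] at h ⊢
        omega
      · refine Finset.sum_congr rfl fun k' _ => ?_
        simp [Matrix.submatrix_apply, Matrix.map_apply]
  · -- (1,3) block
    refine Matrix.ext fun i' j' => ?_
    rw [Matrix.submatrix_apply, entry3, entry3]
    refine Eq.trans (sum_emb (n := p + m + q) (emb3 p m q) inj3
      (fun l => ∑ k, R.map Polynomial.C (emb1 p m q i') k * Z k l *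
        R.map Polynomial.C (emb3 p m q j') l) ?_) ?_
    · intro l hl
      have hl' := mem3 l hl
      refine Finset.sum_eq_zero fun k _ => ?_
      apply hzero
      rcases Nat.lt_or_ge (l : ℕ) ((emb3 p m q j' : Fin (p + m + q)) : ℕ) with h | h
      · exact Or.inr (Or.inl h)
      refine Or.inr (Or.inr (hZ' k l ?_))
      simp only [emb3] at h ⊢
      omega
    · refine Finset.sum_congr rfl fun l' _ => ?_
      refine Eq.trans (sum_emb (n := p + m + q) (emb1 p m q) inj1
        (fun k => R.map Polynomial.C (emb1 p m q i') k * Z k (emb3 p m q l') *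
          R.map Polynomial.C (emb3 p m q j') (emb3 p m q l')) ?_) ?_
      · intro k hk
        have hk' := mem1 k hk
        apply hzero
        refine Or.inr (Or.inr (hZ' k (emb3 p m q l') ?_))
        simp only [emb3]
        omega
      · refine Finset.sum_congr rfl fun k' _ => ?_
        simp [Matrix.submatrix_apply, Matrix.map_apply]
  · -- (3,1) block
    refine Matrix.ext fun i' j' => ?_
    rw [Matrix.submatrix_apply, entry3, entry3]
    refine Eq.trans (sum_emb (n := p + m + q) (emb1 p m q) inj1
      (fun l => ∑ k, R.map Polynomial.C (emb3 p m q i') k * Z k l *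
        R.map Polynomial.C (emb1 p m q j') l) ?_) ?_
    · intro l hl
      have hl' := mem1 l hl
      refine Finset.sum_eq_zero fun k _ => ?_
      apply hzero
      rcases Nat.lt_or_ge (k : ℕ) ((emb3 p m q i' : Fin (p + m + q)) : ℕ) with h | h
      · exact Or.inl h
      refine Or.inr (Or.inr (hZ' k l ?_))
      simp only [emb3] at h ⊢
      omega
    · refine Finset.sum_congr rfl fun l' _ => ?_
      refine Eq.trans (sum_emb (n := p + m + q) (emb3 p m q) inj3
        (fun k => R.map Polynomial.C (emb3 p m q i') k * Z k (emb1 p m q l') *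
          R.map Polynomial.C (emb1 p m q j') (emb1 p m q l')) ?_) ?_
      · intro k hk
        have hk' := mem3 k hk
        apply hzero
        rcases Nat.lt_or_ge (k : ℕ) ((emb3 p m q i' : Fin (p + m + q)) : ℕ) with h | h
        · exact Or.inl h
        refine Or.inr (Or.inr (hZ' k (emb1 p m q l') ?_))
        simp only [emb1, emb3] at h ⊢
        omega
      · refine Finset.sum_congr rfl fun k' _ => ?_
        simp [Matrix.submatrix_apply, Matrix.map_apply]
  · -- det of block 1
    refine isUnit_iff_ne_zero.mpr ?_
    rw [Matrix.det_of_upperTriangular (M := R.submatrix (emb1 p m q) (emb1 p m q))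
      (fun a b hab => hRzero _ _ (by
        have : (b : ℕ) < (a : ℕ) := hab; simp only [emb1]; omega))]
    exact Finset.prod_ne_zero_iff.mpr fun i _ => hdiag _
  · -- det of block 2
    refine isUnit_iff_ne_zero.mpr ?_
    rw [Matrix.det_of_upperTriangular (M := R.submatrix (emb2 p m q) (emb2 p m q))
      (fun a b hab => hRzero _ _ (by
        have : (b : ℕ) < (a : ℕ) := hab; simp only [emb2]; omega))]
    exact Finset.prod_ne_zero_iff.mpr fun i _ => hdiag _
  · -- det of block 3
    refine isUnit_iff_ne_zero.mpr ?_
    rw [Matrix.det_of_upperTriangular (M := R.submatrix (emb3 p m q) (emb3 p m q))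
      (fun a b hab => hRzero _ _ (by
        have : (b : ℕ) < (a : ℕ) := hab; simp only [emb3]; omega))]
    exact Finset.prod_ne_zero_iff.mpr fun i _ => hdiag _
end
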